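/- Let φ be a unit vector in H_R ⊆ H_S ⊗ H_E and let X_R be an operator on H_R with 0 ≤ X_R ≤ 𝟙. Define |φ̃⟩ = √(X_R)|φ⟩, ρ_S = Tr_E(|φ⟩⟨φ|), and ρ̃_S = Tr_E(|φ̃⟩⟨φ̃|). Then ‖ρ_S − ρ̃_S‖₁ ≤ 2√(1 − ⟨φ|X_R|φ⟩). -/

import Mathlib

open Matrix MeasureTheory
open scoped ComplexOrder Kronecker

/-- The positive semidefinite square root of a positive semidefinite matrix
(the definition `Matrix.PosSemidef.sqrt` of the older Mathlib, since removed). -/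
noncomputable def Matrix.PosSemidef.sqrt {n : Type*} [Fintype n] [DecidableEq n]
    {𝕜 : Type*} [RCLike 𝕜] {A : Matrix n n 𝕜} (hA : A.PosSemidef) : Matrix n n 𝕜 :=
  hA.1.eigenvectorUnitary.1 * diagonal ((↑) ∘ (√·) ∘ hA.1.eigenvalues) *
  (star hA.1.eigenvectorUnitary : Matrix n n 𝕜)

/-- The trace norm `‖M‖₁ = Tr √(M†M)` of a complex matrix. -/
noncomputable def traceNorm {n : Type*} [Fintype n] [DecidableEq n]
    (M : Matrix n n ℂ) : ℝ :=
  ((Matrix.posSemidef_conjTranspose_mul_self M).sqrt).trace.re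

/-- The Hilbert–Schmidt norm `‖M‖₂ = √(Tr (M†M))`. -/
noncomputable def hsNorm {n : Type*} [Fintype n] (M : Matrix n n ℂ) : ℝ :=
  Real.sqrt ((Mᴴ * M).trace.re)

/-- Euclidean norm of a vector. -/
noncomputable def vnorm {n : Type*} [Fintype n] (φ : n → ℂ) : ℝ :=
  Real.sqrt (∑ i, Complex.normSq (φ i))

/-- Inner product `⟨φ|ψ⟩`. -/
noncomputable def cinner {n : Type*} [Fintype n] (φ ψ : n → ℂ) : ℂ := ∑ i, star (φ i) * ψ i

/-- Outer product `|φ⟩⟨φ|`. -/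
noncomputable def outer {n : Type*} (φ : n → ℂ) : Matrix n n ℂ :=
  Matrix.of fun i j => φ i * star (φ j)

/-- Partial trace over the environment (second factor). -/
noncomputable def ptraceE {dS dE : ℕ} (M : Matrix (Fin dS × Fin dE) (Fin dS × Fin dE) ℂ) :
    Matrix (Fin dS) (Fin dS) ℂ :=
  Matrix.of fun s s' => ∑ e, M (s, e) (s', e)

/-- Partial trace over the system (first factor). -/
noncomputable def ptraceS {dS dE : ℕ} (M : Matrix (Fin dS × Fin dE) (Fin dS × Fin dE) ℂ) :
    Matrix (Fin dE) (Fin dE) ℂ :=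
  Matrix.of fun e e' => ∑ s, M (s, e) (s, e')

/-- The swap (flip) operator `F(|a⟩⊗|b⟩) = |b⟩⊗|a⟩` as a matrix. -/
noncomputable def swapMatrix (d : ℕ) : Matrix (Fin d × Fin d) (Fin d × Fin d) ℂ :=
  Matrix.of fun p q => if p.1 = q.2 ∧ p.2 = q.1 then 1 else 0

/-- `μ` is the uniform (Haar, unitarily invariant) probability measure on the unit
sphere of the subspace given by the orthogonal projection `P`: it is a probability
measure, concentrated on unit vectors of the range of `P`, and invariant under every
unitary commuting with `P` (i.e. preserving the subspace). -/
def IsUniformOnSphere {ι : Type*} [Fintype ι] [DecidableEq ι]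
    (P : Matrix ι ι ℂ) (μ : Measure (ι → ℂ)) : Prop :=
  IsProbabilityMeasure μ ∧
  μ {φ | P.mulVec φ = φ ∧ vnorm φ = 1} = 1 ∧
  ∀ U ∈ Matrix.unitaryGroup ι ℂ, U * P = P * U →
    Measure.map (fun φ => U.mulVec φ) μ = μ

/-!
Write `ψ = √X φ` and `δ = φ - ψ`, so that `|φ⟩⟨φ| - |ψ⟩⟨ψ| = |φ⟩⟨δ| + |δ⟩⟨ψ|`. The trace norm is
dual to the operator norm: `‖M‖₁ = max {Re Tr (C† M) | C† C ≤ 1}`. Duality gives the triangle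
inequality, the rank-one bound `‖|a⟩⟨b|‖₁ ≤ ‖a‖ ‖b‖`, and monotonicity under the partial trace,
because `C ⊗ 𝟙` is a contraction whenever `C` is. Finally `‖ψ‖ ≤ 1`, and since `X ≤ √X` on
`0 ≤ X ≤ 𝟙`, `‖δ‖² = ⟨φ|(𝟙 - √X)²|φ⟩ ≤ ⟨φ|𝟙 - X|φ⟩ = 1 - ⟨φ|X|φ⟩`.
-/

open scoped MatrixOrder

section Vectors

variable {n : Type*} [Fintype n]

lemma vnorm_eq_norm_toLp (x : n → ℂ) : vnorm x = ‖WithLp.toLp 2 x‖ := by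
  simp [vnorm, EuclideanSpace.norm_eq, Complex.normSq_eq_norm_sq]

lemma vnorm_nonneg (x : n → ℂ) : 0 ≤ vnorm x := Real.sqrt_nonneg _

lemma re_star_dotProduct_self (x : n → ℂ) : (star x ⬝ᵥ x).re = vnorm x ^ 2 := by
  rw [vnorm, Real.sq_sqrt (Finset.sum_nonneg fun i _ => Complex.normSq_nonneg _)]
  simp [dotProduct, Complex.re_sum, Complex.normSq_apply]

lemma re_star_dotProduct_le (x y : n → ℂ) : (star x ⬝ᵥ y).re ≤ vnorm x * vnorm y := by
  rw [vnorm_eq_norm_toLp, vnorm_eq_norm_toLp, dotProduct_comm,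
    ← EuclideanSpace.inner_toLp_toLp (𝕜 := ℂ)]
  exact re_inner_le_norm (𝕜 := ℂ) _ _

lemma vnorm_mulVec_sq (A : Matrix n n ℂ) (x : n → ℂ) :
    vnorm (A *ᵥ x) ^ 2 = (star x ⬝ᵥ (Aᴴ * A) *ᵥ x).re := by
  rw [← re_star_dotProduct_self, star_mulVec, ← dotProduct_mulVec, mulVec_mulVec]

lemma re_star_dotProduct_mulVec_mono {A B : Matrix n n ℂ} (h : A ≤ B) (x : n → ℂ) :
    (star x ⬝ᵥ A *ᵥ x).re ≤ (star x ⬝ᵥ B *ᵥ x).re := by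
  have := (Matrix.le_iff.mp h).re_dotProduct_nonneg x
  rw [sub_mulVec, dotProduct_sub, map_sub] at this
  simpa [sub_nonneg] using this

lemma vnorm_mulVec_le [DecidableEq n] {C : Matrix n n ℂ} (hC : Cᴴ * C ≤ 1) (x : n → ℂ) :
    vnorm (C *ᵥ x) ≤ vnorm x := by
  have h := re_star_dotProduct_mulVec_mono hC x
  rw [← vnorm_mulVec_sq, one_mulVec, re_star_dotProduct_self] at h
  exact (pow_le_pow_iff_left₀ (vnorm_nonneg _) (vnorm_nonneg _) two_ne_zero).mp h

lemma vnorm_transpose_sq {m : Type*} (A : Matrix n m ℂ) (i : m) :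
    vnorm (Aᵀ i) ^ 2 = ((Aᴴ * A) i i).re := by
  rw [← re_star_dotProduct_self]; rfl

end Vectors

section TraceNorm

variable {n : Type*} [Fintype n] [DecidableEq n]

lemma Matrix.PosSemidef.sqrt_eq_cfc {𝕜 : Type*} [RCLike 𝕜] {A : Matrix n n 𝕜}
    (hA : A.PosSemidef) : hA.sqrt = cfc Real.sqrt A := by
  rw [hA.1.cfc_eq, IsHermitian.cfc, Unitary.conjStarAlgAut_apply]
  rfl

lemma traceNorm_eq_sum_sqrt_eigenvalues (M : Matrix n n ℂ) :
    traceNorm M = ∑ i, √((posSemidef_conjTranspose_mul_self M).1.eigenvalues i) := by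
  rw [traceNorm, PosSemidef.sqrt, trace_mul_cycle, Unitary.coe_star_mul_self, one_mul,
    trace_diagonal, Complex.re_sum]
  simp

omit [DecidableEq n] in
lemma re_trace_conjTranspose_mul_le {m : Type*} [Fintype m] (A B : Matrix m n ℂ) :
    (Aᴴ * B).trace.re ≤ ∑ i, vnorm (Aᵀ i) * vnorm (Bᵀ i) := by
  rw [trace, Complex.re_sum]
  exact Finset.sum_le_sum fun i _ => re_star_dotProduct_le (Aᵀ i) (Bᵀ i)

theorem re_trace_le_traceNorm {C : Matrix n n ℂ} (hC : Cᴴ * C ≤ 1) (M : Matrix n n ℂ) :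
    (Cᴴ * M).trace.re ≤ traceNorm M := by
  set hM := (posSemidef_conjTranspose_mul_self M).1
  -- In an eigenbasis `V` of `M† M`, the columns of `M V` have norms `√λᵢ` and those of `C V`
  -- have norms at most `1`; pair them column by column.
  set V : Matrix n n ℂ := ↑hM.eigenvectorUnitary
  have hVV : Vᴴ * V = 1 := Unitary.coe_star_mul_self _
  have hdiag : (M * V)ᴴ * (M * V) = diagonal (RCLike.ofReal ∘ hM.eigenvalues) := by
    rw [← hM.conjStarAlgAut_star_eigenvectorUnitary, Unitary.conjStarAlgAut_star_apply,
      conjTranspose_mul]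
    simp only [Matrix.mul_assoc, star_eq_conjTranspose]
    rfl
  have htrace : (Cᴴ * M).trace = ((C * V)ᴴ * (M * V)).trace := by
    have hVV' : V * Vᴴ = 1 := Unitary.coe_mul_star_self _
    rw [conjTranspose_mul, show Vᴴ * Cᴴ * (M * V) = Vᴴ * (Cᴴ * M * V) by
      simp only [Matrix.mul_assoc], trace_mul_comm Vᴴ, Matrix.mul_assoc, hVV', Matrix.mul_one]
  have hC_col : ∀ i, vnorm ((C * V)ᵀ i) ≤ 1 := fun i => by
    have hV_col : vnorm (Vᵀ i) = 1 := by
      rw [← pow_eq_one_iff_of_nonneg (vnorm_nonneg _) two_ne_zero, vnorm_transpose_sq, hVV]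
      simp
    exact hV_col ▸ vnorm_mulVec_le hC (Vᵀ i)
  have hM_col : ∀ i, vnorm ((M * V)ᵀ i) = √(hM.eigenvalues i) := fun i => by
    rw [← Real.sqrt_sq (vnorm_nonneg _), vnorm_transpose_sq, hdiag]
    simp
  rw [htrace, traceNorm_eq_sum_sqrt_eigenvalues]
  refine (re_trace_conjTranspose_mul_le _ _).trans (Finset.sum_le_sum fun i _ => ?_)
  rw [hM_col]
  exact mul_le_of_le_one_left (Real.sqrt_nonneg _) (hC_col i)

theorem exists_re_trace_eq_traceNorm (M : Matrix n n ℂ) :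
    ∃ C : Matrix n n ℂ, Cᴴ * C ≤ 1 ∧ (Cᴴ * M).trace.re = traceNorm M := by
  have hM : IsSelfAdjoint (Mᴴ * M) := (posSemidef_conjTranspose_mul_self M).isHermitian
  have hcont (f : ℝ → ℝ) : ContinuousOn f (spectrum ℝ (Mᴴ * M)) :=
    finite_real_spectrum.continuousOn f
  -- `C = M W` with `W = (M† M)^(-1/2)` taken as a pseudo-inverse: `(√0)⁻¹ = 0` in `ℝ`.
  set W := cfc (fun x : ℝ => (√x)⁻¹) (Mᴴ * M)
  have hW : Wᴴ = W := IsSelfAdjoint.cfc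
  have hWM : W * (Mᴴ * M) = cfc Real.sqrt (Mᴴ * M) := by
    conv_lhs => rw [← cfc_id' ℝ (Mᴴ * M)]
    rw [← cfc_mul _ _ _ (hcont _) (hcont _)]
    exact cfc_congr fun x _ => by simp only [← div_eq_inv_mul, Real.div_sqrt]
  refine ⟨M * W, ?_, ?_⟩
  · calc (M * W)ᴴ * (M * W) = W * (Mᴴ * M) * W := by
          rw [conjTranspose_mul, hW]; simp only [Matrix.mul_assoc]
      _ = cfc (fun x => √x * (√x)⁻¹) (Mᴴ * M) := by rw [hWM, ← cfc_mul _ _ _ (hcont _) (hcont _)]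
      _ ≤ 1 := cfc_le_one _ _ fun x _ => mul_inv_le_one
  · rw [conjTranspose_mul, hW, Matrix.mul_assoc, hWM, traceNorm, PosSemidef.sqrt_eq_cfc]

theorem traceNorm_add_le (A B : Matrix n n ℂ) :
    traceNorm (A + B) ≤ traceNorm A + traceNorm B := by
  obtain ⟨C, hC, hval⟩ := exists_re_trace_eq_traceNorm (A + B)
  rw [← hval, Matrix.mul_add, trace_add, Complex.add_re]
  exact add_le_add (re_trace_le_traceNorm hC A) (re_trace_le_traceNorm hC B)

theorem traceNorm_vecMulVec_le (a b : n → ℂ) :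
    traceNorm (vecMulVec a (star b)) ≤ vnorm a * vnorm b := by
  obtain ⟨C, hC, hval⟩ := exists_re_trace_eq_traceNorm (vecMulVec a (star b))
  have htrace : (Cᴴ * vecMulVec a (star b)).trace = star (C *ᵥ b) ⬝ᵥ a := by
    rw [mul_vecMulVec, trace_vecMulVec, dotProduct_comm, star_mulVec, dotProduct_mulVec]
  calc traceNorm (vecMulVec a (star b))
      = (star (C *ᵥ b) ⬝ᵥ a).re := by rw [← hval, htrace]
    _ ≤ vnorm (C *ᵥ b) * vnorm a := re_star_dotProduct_le _ _
    _ ≤ vnorm b * vnorm a := mul_le_mul_of_nonneg_right (vnorm_mulVec_le hC b) (vnorm_nonneg a)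
    _ = vnorm a * vnorm b := mul_comm _ _

end TraceNorm

section PartialTrace

variable {dS dE : ℕ}

lemma ptraceE_sub (A B : Matrix (Fin dS × Fin dE) (Fin dS × Fin dE) ℂ) :
    ptraceE (A - B) = ptraceE A - ptraceE B := by
  ext s s'
  simp [ptraceE, Finset.sum_sub_distrib]

lemma trace_kronecker_one_mul (A : Matrix (Fin dS) (Fin dS) ℂ)
    (M : Matrix (Fin dS × Fin dE) (Fin dS × Fin dE) ℂ) :
    ((A ⊗ₖ (1 : Matrix (Fin dE) (Fin dE) ℂ)) * M).trace = (A * ptraceE M).trace := by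
  simp only [trace, diag_apply, mul_apply, kroneckerMap_apply, one_apply, mul_ite, mul_one,
    mul_zero, ite_mul, zero_mul, Fintype.sum_prod_type, Finset.sum_ite_eq, Finset.mem_univ,
    ↓reduceIte, ptraceE, of_apply, Finset.mul_sum]
  exact Finset.sum_congr rfl fun _ _ => Finset.sum_comm

theorem traceNorm_ptraceE_le (M : Matrix (Fin dS × Fin dE) (Fin dS × Fin dE) ℂ) :
    traceNorm (ptraceE M) ≤ traceNorm M := by
  obtain ⟨C, hC, hval⟩ := exists_re_trace_eq_traceNorm (ptraceE M)
  have hC' : (C ⊗ₖ (1 : Matrix (Fin dE) (Fin dE) ℂ))ᴴ * (C ⊗ₖ 1) ≤ 1 := by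
    have h : (1 - Cᴴ * C) ⊗ₖ (1 : Matrix (Fin dE) (Fin dE) ℂ) = 1 - (Cᴴ * C) ⊗ₖ 1 := by
      rw [eq_sub_iff_add_eq, ← add_kronecker, sub_add_cancel, one_kronecker_one]
    rw [conjTranspose_kronecker, conjTranspose_one, ← mul_kronecker_mul, one_mul, le_iff, ← h]
    exact (le_iff.mp hC).kronecker PosSemidef.one
  calc traceNorm (ptraceE M) = (Cᴴ * ptraceE M).trace.re := hval.symm
    _ = ((C ⊗ₖ (1 : Matrix (Fin dE) (Fin dE) ℂ))ᴴ * M).trace.re := by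
      rw [conjTranspose_kronecker, conjTranspose_one, trace_kronecker_one_mul]
    _ ≤ traceNorm M := re_trace_le_traceNorm hC' M

end PartialTrace

section SquareRoot

variable {n 𝕜 : Type*} [Fintype n] [DecidableEq n] [RCLike 𝕜] {X : Matrix n n 𝕜}

lemma Matrix.PosSemidef.sqrt_mul_self (hX : X.PosSemidef) : hX.sqrt * hX.sqrt = X := by
  conv_rhs => rw [← cfc_id' ℝ X]
  rw [hX.sqrt_eq_cfc, ← cfc_mul ..]
  exact cfc_congr fun x hx => Real.mul_self_sqrt (spectrum_nonneg_of_nonneg hX.nonneg hx)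

lemma Matrix.PosSemidef.conjTranspose_sqrt (hX : X.PosSemidef) : hX.sqrtᴴ = hX.sqrt := by
  rw [hX.sqrt_eq_cfc]
  exact IsSelfAdjoint.cfc

lemma Matrix.PosSemidef.le_sqrt (hX : X.PosSemidef) (hX1 : X ≤ 1) : X ≤ hX.sqrt := by
  rw [hX.sqrt_eq_cfc]
  conv_lhs => rw [← cfc_id' ℝ X]
  exact cfc_mono fun x hx => Real.le_sqrt_self_iff.mpr ((CFC.le_one_iff X).mp hX1 x hx)

lemma Matrix.PosSemidef.conjTranspose_one_sub_sqrt_mul_le (hX : X.PosSemidef) (hX1 : X ≤ 1) :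
    (1 - hX.sqrt)ᴴ * (1 - hX.sqrt) ≤ 1 - X := by
  have hsq : (1 - hX.sqrt) * (1 - hX.sqrt) = 1 - hX.sqrt - hX.sqrt + hX.sqrt * hX.sqrt := by
    noncomm_ring
  have hle := le_iff.mp (hX.le_sqrt hX1)
  rw [conjTranspose_sub, conjTranspose_one, hX.conjTranspose_sqrt, hsq, hX.sqrt_mul_self, le_iff,
    show 1 - X - (1 - hX.sqrt - hX.sqrt + X) = (hX.sqrt - X) + (hX.sqrt - X) by abel]
  exact hle.add hle

end SquareRoot

lemma outer_sub_outer {n : Type*} (a b : n → ℂ) :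
    outer a - outer b = vecMulVec a (star (a - b)) + vecMulVec (a - b) (star b) := by
  ext i j
  simp only [outer, Matrix.sub_apply, Matrix.add_apply, of_apply, vecMulVec_apply, Pi.star_apply,
    Pi.sub_apply, star_sub]
  ring

/-- For a POVM element `0 ≤ X ≤ 𝟙` and unit `φ`, with `|φ̃⟩ = √X |φ⟩`:
`‖Tr_E |φ⟩⟨φ| − Tr_E |φ̃⟩⟨φ̃|‖₁ ≤ 2√(1 − ⟨φ|X|φ⟩)`. -/
theorem measurement_disturbance (dS dE : ℕ)
    (X : Matrix (Fin dS × Fin dE) (Fin dS × Fin dE) ℂ)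
    (hX : X.PosSemidef) (hX1 : (1 - X).PosSemidef)
    (phi : Fin dS × Fin dE → ℂ) (hphi : vnorm phi = 1) :
    traceNorm (ptraceE (outer phi) - ptraceE (outer (hX.sqrt.mulVec phi)))
      ≤ 2 * Real.sqrt (1 - (cinner phi (X.mulVec phi)).re) := by
  set S := hX.sqrt
  set t := (cinner phi (X *ᵥ phi)).re
  have hX_le_one : X ≤ 1 := le_iff.mpr hX1
  have hpsi : vnorm (S *ᵥ phi) ≤ 1 :=
    hphi ▸ vnorm_mulVec_le (by rwa [hX.conjTranspose_sqrt, hX.sqrt_mul_self]) phi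
  have hdelta : vnorm (phi - S *ᵥ phi) ≤ √(1 - t) := by
    have hmono := re_star_dotProduct_mulVec_mono (hX.conjTranspose_one_sub_sqrt_mul_le hX_le_one) phi
    rw [← vnorm_mulVec_sq, sub_mulVec, one_mulVec, sub_mulVec, one_mulVec, dotProduct_sub,
      Complex.sub_re, re_star_dotProduct_self, hphi, one_pow] at hmono
    rw [← Real.sqrt_sq (vnorm_nonneg _)]
    exact Real.sqrt_le_sqrt hmono
  calc traceNorm (ptraceE (outer phi) - ptraceE (outer (S *ᵥ phi)))
      ≤ traceNorm (outer phi - outer (S *ᵥ phi)) := ptraceE_sub .. ▸ traceNorm_ptraceE_le _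
    _ ≤ vnorm phi * vnorm (phi - S *ᵥ phi) + vnorm (phi - S *ᵥ phi) * vnorm (S *ᵥ phi) := by
      rw [outer_sub_outer]
      exact (traceNorm_add_le _ _).trans
        (add_le_add (traceNorm_vecMulVec_le _ _) (traceNorm_vecMulVec_le _ _))
    _ ≤ 2 * √(1 - t) := by
      rw [hphi]
      nlinarith [vnorm_nonneg (phi - S *ᵥ phi), vnorm_nonneg (S *ᵥ phi)]
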